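/- Let α and β be order automorphisms of (E, E₊) such that the first component of α(r, x, y) equals 5r for all (r, x, y) ∈ E, and the first component of β(r, x, y) equals (2 + √3)r for all (r, x, y) ∈ E. Then α ∘ β ≠ β ∘ α. -/

import Mathlib

/-- The additive subgroup `E` of `ℝ × ℤ × ℤ`: all triples `(r, x, y)` such that
`r = (j + k√3)/5^(6i)`, `x ≡ j (mod 9)` and `y ≡ k (mod 3)` for some integers `i, j, k`. -/
def Eset : Set (ℝ × ℤ × ℤ) :=
  {p | ∃ i j k : ℤ, p.1 = ((j : ℝ) + (k : ℝ) * Real.sqrt 3) / (5 : ℝ) ^ (6 * i) ∧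
    p.2.1 ≡ j [ZMOD 9] ∧ p.2.2 ≡ k [ZMOD 3]}

/-- The positive cone `E₊ = {(r, x, y) ∈ E : r > 0} ∪ {(0, 0, 0)}`. -/
def Epos : Set (ℝ × ℤ × ℤ) :=
  {p | p ∈ Eset ∧ 0 < p.1} ∪ {0}

/-- An order automorphism of `(E, E₊)`: an additive group automorphism of `E`
(a bijection of `E` onto itself which is additive on `E`) with `φ(E₊) = E₊`. -/
structure IsOrderAuto (φ : ℝ × ℤ × ℤ → ℝ × ℤ × ℤ) : Prop where
  bijOn : Set.BijOn φ Eset Eset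
  addOn : ∀ p ∈ Eset, ∀ q ∈ Eset, φ (p + q) = φ p + φ q
  posEq : φ '' Epos = Epos

/-!
The kernel `K` of the projection `E → ℝ` is the lattice `{(0, 9s, 3t)}`, and modulo `K` every
element of `E` is divisible by `5 ^ 6`; hence an additive map `E → ℤ` vanishing on `K` has values
divisible by every power of `5 ^ 6`, so it is zero. Consequently an order automorphism scaling the
real coordinate by `λ = a + b√3` acts on the coordinates `(x, 3y)` by an integer matrix, which is
unimodular because the automorphism restricts to an automorphism of `K`, and which modulo `9`
is multiplication by `λ` on the residues of `j + k√3`. For `λ = 5` and `λ = 2 + √3` these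
constraints already force the two products of the matrices to differ modulo `27`.
-/

open Real

lemma five_pow_mul_modEq {m : ℤ} (hm : m ∣ 9) (n : ℕ) (j : ℤ) :
    5 ^ (6 * n) * j ≡ j [ZMOD m] := by
  have h : (5 : ℤ) ^ 6 ≡ 1 [ZMOD 9] := by decide
  simpa [pow_mul] using ((h.pow n).mul_right j).of_dvd hm

lemma add_mul_sqrt_three_inj {a b c d : ℤ} (h : (a : ℝ) + b * √3 = c + d * √3) :
    a = c ∧ b = d := by
  obtain rfl : b = d := by
    by_contra hbd
    refine ((Nat.prime_three.irrational_sqrt).intCast_mul (sub_ne_zero.2 hbd)).ne_int (c - a) ?_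
    push_cast
    linarith
  exact ⟨by exact_mod_cast (by linarith : (a : ℝ) = c), rfl⟩

/-- Negative exponents can be absorbed into the numerator since `5 ^ 6 ≡ 1 [ZMOD 9]`. -/
lemma mem_Eset_iff {p : ℝ × ℤ × ℤ} : p ∈ Eset ↔ ∃ (n : ℕ) (j k : ℤ),
    5 ^ (6 * n) * p.1 = j + k * √3 ∧ p.2.1 ≡ j [ZMOD 9] ∧ p.2.2 ≡ k [ZMOD 3] := by
  constructor
  · rintro ⟨i, j, k, hr, hx, hy⟩
    obtain ⟨n, rfl | rfl⟩ := Int.eq_nat_or_neg i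
    · refine ⟨n, j, k, ?_, hx, hy⟩
      rw [hr, show 6 * (n : ℤ) = (6 * n : ℕ) by push_cast; ring, zpow_natCast]
      field_simp
    · refine ⟨0, 5 ^ (6 * n) * j, 5 ^ (6 * n) * k, ?_,
        hx.trans (five_pow_mul_modEq dvd_rfl n j).symm,
        hy.trans (five_pow_mul_modEq (by norm_num) n k).symm⟩
      rw [hr, show 6 * -(n : ℤ) = -(6 * n : ℕ) by push_cast; ring, zpow_neg, zpow_natCast]
      push_cast
      field_simp
  · rintro ⟨n, j, k, hr, hx, hy⟩
    refine ⟨n, j, k, ?_, hx, hy⟩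
    rw [← hr, show 6 * (n : ℤ) = (6 * n : ℕ) by push_cast; ring, zpow_natCast]
    field_simp

def Egroup : AddSubgroup (ℝ × ℤ × ℤ) where
  carrier := Eset
  zero_mem' := mem_Eset_iff.2 ⟨0, 0, 0, by simp, rfl, rfl⟩
  add_mem' := by
    intro p q hp hq
    obtain ⟨n, j, k, hr, hx, hy⟩ := mem_Eset_iff.1 hp
    obtain ⟨m, j', k', hr', hx', hy'⟩ := mem_Eset_iff.1 hq
    refine mem_Eset_iff.2 ⟨n + m, 5 ^ (6 * m) * j + 5 ^ (6 * n) * j',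
      5 ^ (6 * m) * k + 5 ^ (6 * n) * k', ?_, ?_, ?_⟩
    · rw [Prod.fst_add, mul_add, mul_add, pow_add]
      push_cast
      linear_combination (5 : ℝ) ^ (6 * m) * hr + (5 : ℝ) ^ (6 * n) * hr'
    · exact (hx.add hx').trans
        ((five_pow_mul_modEq dvd_rfl m j).add (five_pow_mul_modEq dvd_rfl n j')).symm
    · exact (hy.add hy').trans
        ((five_pow_mul_modEq (by norm_num) m k).add (five_pow_mul_modEq (by norm_num) n k')).symm
  neg_mem' := by
    intro p hp
    obtain ⟨n, j, k, hr, hx, hy⟩ := mem_Eset_iff.1 hp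
    refine mem_Eset_iff.2 ⟨n, -j, -k, ?_, hx.neg, hy.neg⟩
    rw [Prod.fst_neg]
    push_cast
    linear_combination -hr

lemma modEq_of_mem_Eset {p : ℝ × ℤ × ℤ} (hp : p ∈ Eset) {J K : ℤ} (h : p.1 = J + K * √3) :
    p.2.1 ≡ J [ZMOD 9] ∧ p.2.2 ≡ K [ZMOD 3] := by
  obtain ⟨n, j, k, hr, hx, hy⟩ := mem_Eset_iff.1 hp
  obtain ⟨rfl, rfl⟩ := add_mul_sqrt_three_inj (a := 5 ^ (6 * n) * J) (b := 5 ^ (6 * n) * K)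
    (by push_cast; rw [← hr, h]; ring)
  exact ⟨hx.trans (five_pow_mul_modEq dvd_rfl n J),
    hy.trans (five_pow_mul_modEq (by norm_num) n K)⟩

lemma exists_eq_of_mem_Eset_of_fst_eq_zero {p : ℝ × ℤ × ℤ} (hp : p ∈ Eset) (h0 : p.1 = 0) :
    ∃ s t : ℤ, p = (0, 9 * s, 3 * t) := by
  obtain ⟨hx, hy⟩ := modEq_of_mem_Eset hp (J := 0) (K := 0) (by simp [h0])
  obtain ⟨s, hs⟩ := Int.modEq_zero_iff_dvd.1 hx
  obtain ⟨t, ht⟩ := Int.modEq_zero_iff_dvd.1 hy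
  exact ⟨s, t, Prod.ext h0 (Prod.ext hs ht)⟩

lemma AddMonoidHom.eq_zero_of_forall_exists_sub_nsmul_mem {G : Type*} [AddCommGroup G]
    {H : AddSubgroup G} {N : ℕ} (hN : 2 ≤ N) (hdiv : ∀ g : G, ∃ q, g - N • q ∈ H)
    (ψ : G →+ ℤ) (hψ : H ≤ ψ.ker) : ψ = 0 := by
  have hpow : ∀ n g, (N : ℤ) ^ n ∣ ψ g := by
    intro n
    induction n with
    | zero => simp
    | succ n ih =>
      intro g
      obtain ⟨q, hq⟩ := hdiv g
      have hg : ψ g = N * ψ q := by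
        simpa [sub_eq_zero] using hψ hq
      rw [hg, pow_succ']
      exact mul_dvd_mul_left _ (ih q)
  ext g
  exact Int.eq_zero_of_dvd_of_natAbs_lt_natAbs (hpow _ g) (by simpa using Nat.lt_pow_self hN)

def xHom : ℝ × ℤ × ℤ →+ ℤ := (AddMonoidHom.fst ℤ ℤ).comp (AddMonoidHom.snd ℝ (ℤ × ℤ))

def yHom : ℝ × ℤ × ℤ →+ ℤ := (AddMonoidHom.snd ℤ ℤ).comp (AddMonoidHom.snd ℝ (ℤ × ℤ))

namespace Egroup

def fstHom : Egroup →+ ℝ := (AddMonoidHom.fst ℝ (ℤ × ℤ)).comp Egroup.subtype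

def kerX : Egroup := ⟨(0, 9, 0), ⟨0, 0, 0, by simp, by decide, rfl⟩⟩

def kerY : Egroup := ⟨(0, 0, 3), ⟨0, 0, 0, by simp, rfl, by decide⟩⟩

lemma exists_sub_nsmul_mem_ker_fstHom (p : Egroup) :
    ∃ q : Egroup, p - 15625 • q ∈ fstHom.ker := by
  obtain ⟨n, j, k, hr, hx, hy⟩ := mem_Eset_iff.1 p.2
  refine ⟨⟨((p : ℝ × ℤ × ℤ).1 / 15625, (p : ℝ × ℤ × ℤ).2),
    mem_Eset_iff.2 ⟨n + 1, j, k, ?_, hx, hy⟩⟩, ?_⟩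
  · rw [← hr]
    ring
  · simp [fstHom]
    ring

lemma nine_mul_apply_eq (g : Egroup →+ ℤ) (p : Egroup) :
    9 * g p = (p : ℝ × ℤ × ℤ).2.1 * g kerX + 3 * (p : ℝ × ℤ × ℤ).2.2 * g kerY := by
  have hψ : 9 • g - g kerX • xHom.comp Egroup.subtype
      - (3 * g kerY) • yHom.comp Egroup.subtype = 0 := by
    refine AddMonoidHom.eq_zero_of_forall_exists_sub_nsmul_mem (by norm_num)
      exists_sub_nsmul_mem_ker_fstHom _ fun q hq ↦ ?_
    obtain ⟨s, t, hst⟩ := exists_eq_of_mem_Eset_of_fst_eq_zero q.2 hq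
    have hq' : q = s • kerX + t • kerY :=
      Subtype.ext (by rw [hst]; ext <;> simp [kerX, kerY, mul_comm])
    simp [hq', xHom, yHom, kerX, kerY]
    ring
  have := DFunLike.congr_fun hψ p
  simp [xHom, yHom] at this
  linarith

end Egroup

/-- `φ` acts on the coordinates `(x, 3y)` of `E` by the integer matrix `!![A, C; B, D]`. -/
def ActsByMatrix (φ : ℝ × ℤ × ℤ → ℝ × ℤ × ℤ) (A B C D : ℤ) : Prop :=
  ∀ p ∈ Eset, (φ p).2.1 = p.2.1 * A + 3 * p.2.2 * C ∧ 3 * (φ p).2.2 = p.2.1 * B + 3 * p.2.2 * D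

lemma ActsByMatrix.modEq {φ : ℝ × ℤ × ℤ → ℝ × ℤ × ℤ} {A B C D : ℤ}
    (hM : ActsByMatrix φ A B C D) (hmaps : Set.MapsTo φ Eset Eset) {L : ℝ}
    (hscale : ∀ p ∈ Eset, (φ p).1 = L * p.1) {a b : ℤ} (hL : L = a + b * √3) :
    A ≡ a [ZMOD 9] ∧ B ≡ 3 * b [ZMOD 9] ∧ C ≡ b [ZMOD 3] ∧ D ≡ a [ZMOD 3] := by
  have hone : ((1 : ℝ), (1 : ℤ), (0 : ℤ)) ∈ Eset := ⟨0, 1, 0, by simp, rfl, rfl⟩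
  have hsqrt : (√3, (0 : ℤ), (1 : ℤ)) ∈ Eset := ⟨0, 0, 1, by simp, rfl, rfl⟩
  obtain ⟨hx₁, hy₁⟩ := modEq_of_mem_Eset (hmaps hone) (J := a) (K := b)
    (by rw [hscale _ hone, hL]; ring)
  obtain ⟨hx₂, hy₂⟩ := modEq_of_mem_Eset (hmaps hsqrt) (J := 3 * b) (K := a)
    (by
      rw [hscale _ hsqrt, hL]
      push_cast
      linear_combination (b : ℝ) * Real.mul_self_sqrt (by norm_num : (0 : ℝ) ≤ 3))
  obtain ⟨hA, hB⟩ := hM _ hone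
  obtain ⟨hC, hD⟩ := hM _ hsqrt
  simp only [mul_one, mul_zero, zero_mul, add_zero, zero_add, one_mul] at hA hB hC hD
  unfold Int.ModEq at *
  omega

namespace IsOrderAuto

variable {φ : ℝ × ℤ × ℤ → ℝ × ℤ × ℤ}

def toAddMonoidHom (hφ : IsOrderAuto φ) : Egroup →+ ℝ × ℤ × ℤ :=
  AddMonoidHom.mk' (fun p ↦ φ p) fun p q ↦ hφ.addOn _ p.2 _ q.2

lemma exists_actsByMatrix (hφ : IsOrderAuto φ) {L : ℝ}
    (hscale : ∀ p ∈ Eset, (φ p).1 = L * p.1) :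
    ∃ A B C D, ActsByMatrix φ A B C D := by
  obtain ⟨A, B, hX⟩ := exists_eq_of_mem_Eset_of_fst_eq_zero (hφ.bijOn.mapsTo Egroup.kerX.2)
    (by rw [hscale _ Egroup.kerX.2]; simp [Egroup.kerX])
  obtain ⟨C, D, hY⟩ := exists_eq_of_mem_Eset_of_fst_eq_zero (hφ.bijOn.mapsTo Egroup.kerY.2)
    (by rw [hscale _ Egroup.kerY.2]; simp [Egroup.kerY])
  refine ⟨A, B, C, D, fun p hp ↦ ⟨?_, ?_⟩⟩
  · have := Egroup.nine_mul_apply_eq (xHom.comp hφ.toAddMonoidHom) ⟨p, hp⟩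
    simp [xHom, toAddMonoidHom, hX, hY] at this
    linarith
  · have := Egroup.nine_mul_apply_eq (yHom.comp hφ.toAddMonoidHom) ⟨p, hp⟩
    simp [yHom, toAddMonoidHom, hX, hY] at this
    linarith

lemma isUnit_det (hφ : IsOrderAuto φ) {L : ℝ} (hL : L ≠ 0)
    (hscale : ∀ p ∈ Eset, (φ p).1 = L * p.1) {A B C D : ℤ} (hM : ActsByMatrix φ A B C D) :
    IsUnit (A * D - B * C) := by
  have hpreimage : ∀ w ∈ Eset, w.1 = 0 →
      ∃ s t : ℤ, ((0 : ℝ), 9 * s, 3 * t) ∈ Eset ∧ φ (0, 9 * s, 3 * t) = w := by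
    intro w hw hw0
    obtain ⟨u, hu, rfl⟩ := hφ.bijOn.surjOn hw
    obtain ⟨s, t, rfl⟩ := exists_eq_of_mem_Eset_of_fst_eq_zero hu
      (by simpa [hscale u hu, hL] using hw0)
    exact ⟨s, t, hu, rfl⟩
  obtain ⟨s, t, hm, hX⟩ := hpreimage _ Egroup.kerX.2 rfl
  obtain ⟨s', t', hm', hY⟩ := hpreimage _ Egroup.kerY.2 rfl
  have e := hM _ hm
  have e' := hM _ hm'
  simp only [hX, hY, Egroup.kerX, Egroup.kerY] at e e'
  have h₁ : s * A + t * C = 1 := by linarith [e.1]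
  have h₂ : s * B + t * D = 0 := by linarith [e.2]
  have h₃ : s' * A + t' * C = 0 := by linarith [e'.1]
  have h₄ : s' * B + t' * D = 1 := by linarith [e'.2]
  exact IsUnit.of_mul_eq_one (s * t' - t * s') (by
    linear_combination (s' * B + t' * D) * h₁ + h₄ - (s' * A + t' * C) * h₂)

end IsOrderAuto

/-- The two sides are the `(2,1)` entries of the two products of `!![A, C; B, D]` and
`!![P, R; Q, S]`; unimodularity upgrades the congruences for `D` and `S` to modulo `9`, and then
the entries differ by `9` modulo `27`. -/
lemma mul_add_mul_ne_of_modEq {A B C D P Q R S : ℤ} (hA : A ≡ 5 [ZMOD 9]) (hB : B ≡ 0 [ZMOD 9])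
    (hD : D ≡ 5 [ZMOD 3]) (hdetα : IsUnit (A * D - B * C)) (hP : P ≡ 2 [ZMOD 9])
    (hQ : Q ≡ 3 [ZMOD 9]) (hR : R ≡ 1 [ZMOD 3]) (hS : S ≡ 2 [ZMOD 3])
    (hdetβ : IsUnit (P * S - Q * R)) :
    P * B + Q * D ≠ A * Q + B * S := by
  have hD₉ : D ≡ 2 [ZMOD 9] := by
    have h := (hA.mul_right D).sub (hB.mul_right C)
    rcases Int.isUnit_iff.1 hdetα with h₁ | h₁ <;> rw [h₁] at h <;> unfold Int.ModEq at * <;> omega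
  have hS₉ : S ≡ 2 [ZMOD 9] := by
    have h := (hP.mul_right S).sub (hQ.mul_right R)
    rcases Int.isUnit_iff.1 hdetβ with h₁ | h₁ <;> rw [h₁] at h <;> unfold Int.ModEq at * <;> omega
  intro h
  obtain ⟨b, hb⟩ := hB.symm.dvd
  obtain ⟨c, hc⟩ := (hP.trans hS₉.symm).symm.dvd
  obtain ⟨q, hq⟩ := hQ.symm.dvd
  obtain ⟨e, he⟩ := (hD₉.sub hA).symm.dvd
  exact absurd ⟨3 * b * c + e - q + 3 * q * e, by
    linear_combination -h + (P - S) * hb + 9 * b * hc + (D - A) * hq + (3 + 9 * q) * he⟩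
    (by norm_num : ¬ (27 : ℤ) ∣ 9)

/-- If `α` and `β` are order automorphisms of `(E, E₊)` whose first components scale by
`5` and by `2 + √3` respectively, then `α ∘ β ≠ β ∘ α` (as maps of `E`). -/
theorem stmt_14 (α β : ℝ × ℤ × ℤ → ℝ × ℤ × ℤ) (hα : IsOrderAuto α) (hβ : IsOrderAuto β)
    (hα5 : ∀ p ∈ Eset, (α p).1 = 5 * p.1)
    (hβ23 : ∀ p ∈ Eset, (β p).1 = (2 + Real.sqrt 3) * p.1) :
    ∃ p ∈ Eset, α (β p) ≠ β (α p) := by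
  obtain ⟨A, B, C, D, hMα⟩ := hα.exists_actsByMatrix hα5
  obtain ⟨P, Q, R, S, hMβ⟩ := hβ.exists_actsByMatrix hβ23
  obtain ⟨hA, hB, -, hD⟩ := hMα.modEq hα.bijOn.mapsTo hα5 (a := 5) (b := 0) (by simp)
  obtain ⟨hP, hQ, hR, hS⟩ := hMβ.modEq hβ.bijOn.mapsTo hβ23 (a := 2) (b := 1) (by simp)
  have hp : ((1 : ℝ), (1 : ℤ), (0 : ℤ)) ∈ Eset := ⟨0, 1, 0, by simp, rfl, rfl⟩
  refine ⟨_, hp, fun h ↦ mul_add_mul_ne_of_modEq hA (by simpa using hB) hD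
    (hα.isUnit_det (by norm_num) hα5 hMα) hP (by simpa using hQ) hR hS
    (hβ.isUnit_det (by positivity) hβ23 hMβ) ?_⟩
  have hαβ := (hMα _ (hβ.bijOn.mapsTo hp)).2
  have hβα := (hMβ _ (hα.bijOn.mapsTo hp)).2
  obtain ⟨hαx, hαy⟩ := hMα _ hp
  obtain ⟨hβx, hβy⟩ := hMβ _ hp
  rw [h] at hαβ
  simp only [mul_zero, zero_mul, add_zero, one_mul] at hαx hαy hβx hβy
  linear_combination hβα - hαβ - B * hβx - D * hβy + Q * hαx + S * hαy
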